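/- arXiv:1302.5813 — 4 statements merged into one kernel-verified Lean document; each statement's English description precedes it below -/
import Mathlib

section
/- Let R be a left and right Ore domain with Ore localization K (a skew field). For any left R-module M, the kernel of the canonical map M → K ⊗_R M is exactly tor(M) = {m ∈ M | ∃ a ∈ R, a ≠ 0, a·m = 0}. -/
namespace OreLocalization

variable {R : Type*} [Monoid R] {S : Submonoid R} [OreSet S] {X : Type*} [AddMonoid X]
  [DistribMulAction R X]

theorem oreDiv_one_eq_zero_iff (x : X) : x /ₒ (1 : S) = 0 ↔ ∃ s : S, s • x = 0 := by
  rw [OreLocalization.zero_def, oreDiv_eq_iff]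
  constructor
  · rintro ⟨u, v, hvx, huv⟩
    simp only [OneMemClass.coe_one, mul_one] at huv
    exact ⟨u, by rw [Submonoid.smul_def, huv, ← hvx, smul_zero]⟩
  · rintro ⟨s, hsx⟩
    exact ⟨s, s, by rw [smul_zero, ← Submonoid.smul_def, hsx], by simp⟩

end OreLocalization

theorem stmt7_general (R : Type) [Ring R] [IsDomain R]
    [OreLocalization.OreSet (nonZeroDivisors R)]
    (M : Type) [AddCommGroup M] [Module R M] :
    ∀ m : M, (m /ₒ (1 : nonZeroDivisors R) : OreLocalization (nonZeroDivisors R) M) = 0 ↔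
      ∃ a : R, a ≠ 0 ∧ a • m = 0 := by
  intro m
  rw [OreLocalization.oreDiv_one_eq_zero_iff]
  constructor
  · rintro ⟨s, hsm⟩
    exact ⟨s, nonZeroDivisors.coe_ne_zero s, hsm⟩
  · rintro ⟨a, ha, ham⟩
    exact ⟨⟨a, mem_nonZeroDivisors_of_ne_zero ha⟩, ham⟩

/-- Over a left and right Ore domain `R` with Ore localization `K = R[(R∖{0})⁻¹]` (a skew
field, flat over `R`, so that `K ⊗_R M` is the Ore localization of `M`), the kernel of the
canonical map `M → K ⊗_R M`, `m ↦ m/1`, is exactly `tor(M) = {m | ∃ a ≠ 0, a • m = 0}`. -/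
theorem stmt7 (R : Type) [Ring R] [IsDomain R]
    [OreLocalization.OreSet (nonZeroDivisors R)]
    (hOreR : ∀ a b : R, a ≠ 0 → b ≠ 0 → ∃ c' d' : R, c' ≠ 0 ∧ d' ≠ 0 ∧ a * c' = b * d')
    (M : Type) [AddCommGroup M] [Module R M] :
    ∀ m : M, (m /ₒ (1 : nonZeroDivisors R) : OreLocalization (nonZeroDivisors R) M) = 0 ↔
      ∃ a : R, a ≠ 0 ∧ a • m = 0 :=
  stmt7_general R M
end

section
/- Let R be a left and right Ore domain. Every finitely generated torsion-free left R-module embeds into a finitely generated free R-module. -/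
/-!
Localizing at the nonzero elements turns `R` into a division ring `K` (left Ore condition) and a
torsion-free module `M` into a finite-dimensional `K`-vector space containing `M`, so `M` embeds
`R`-linearly into `Kⁿ`. Each coordinate functional `M → K` takes finitely many values on a set of
generators, and by the right Ore condition these values have a common right denominator `t`:
multiplying on the right by `t`, which is `R`-linear and injective, moves the functional into `R`.
-/

open Function LinearMap OreLocalization nonZeroDivisors

theorem LinearMap.exists_comp_eq_of_range_le {R M N P : Type*} [Semiring R] [AddCommMonoid M]
    [AddCommMonoid N] [AddCommMonoid P] [Module R M] [Module R N] [Module R P]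
    (f : M →ₗ[R] N) {g : P →ₗ[R] N} (hg : Injective g) (hfg : range f ≤ range g) :
    ∃ h : M →ₗ[R] P, g ∘ₗ h = f :=
  ⟨(LinearEquiv.ofInjective g hg).symm ∘ₗ f.codRestrict _ fun m ↦ hfg ⟨m, rfl⟩, by
    ext m
    simp [LinearEquiv.ofInjective_symm_apply]⟩

namespace OreLocalization

section Semiring

variable {R : Type*} [Semiring R] (S : Submonoid R) [OreSet S] (M : Type*) [AddCommMonoid M]
  [Module R M]

def mkLinearMap : M →ₗ[R] M[S⁻¹] where
  toFun m := m /ₒ 1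
  map_add' _ _ := add_oreDiv.symm
  map_smul' r m := (smul_oreDiv_one r m).symm

variable {S M}

@[simp]
lemma mkLinearMap_apply (m : M) : mkLinearMap S M m = m /ₒ 1 := rfl

lemma span_range_mkLinearMap : Submodule.span R[S⁻¹] (Set.range (mkLinearMap S M)) = ⊤ := by
  refine eq_top_iff.2 fun x _ ↦ ?_
  induction x using OreLocalization.ind with | _ m s
  rw [← one_mul s, ← OreLocalization.one_div_smul]
  exact Submodule.smul_mem _ _ (Submodule.subset_span ⟨m, rfl⟩)

instance [Module.Finite R M] : Module.Finite R[S⁻¹] M[S⁻¹] := by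
  classical
  obtain ⟨G, hG⟩ := Module.Finite.fg_top (R := R) (M := M)
  refine ⟨⟨G.image (mkLinearMap S M), eq_top_iff.2 ?_⟩⟩
  rw [← span_range_mkLinearMap, Submodule.span_le]
  rintro _ ⟨m, rfl⟩
  have hm : mkLinearMap S M m ∈ (Submodule.span R (G : Set M)).map (mkLinearMap S M) :=
    Submodule.mem_map_of_mem (hG ▸ Submodule.mem_top)
  rw [Submodule.map_span, ← Finset.coe_image] at hm
  exact Submodule.span_le_restrictScalars R R[S⁻¹] _ hm

end Semiring

lemma mkLinearMap_injective {R : Type*} [Ring R] {S : Submonoid R} [OreSet S] {M : Type*}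
    [AddCommGroup M] [Module R M] (htf : ∀ (s : S) (m : M), (s : R) • m = 0 → m = 0) :
    Injective (mkLinearMap S M) := by
  refine (injective_iff_map_eq_zero _).2 fun m hm ↦ ?_
  rw [mkLinearMap_apply, ← zero_oreDiv 1, oreDiv_eq_iff] at hm
  obtain ⟨u, v, huv, hvu⟩ := hm
  obtain rfl : v = (u : R) := by simpa using hvu.symm
  exact htf u m (by simpa using huv.symm)

end OreLocalization

section OreDomain

variable {R : Type*} [Ring R] [IsDomain R]

lemma nonempty_oreSet_nonZeroDivisors
    (hOreL : ∀ a b : R, a ≠ 0 → b ≠ 0 → ∃ c d : R, c ≠ 0 ∧ d ≠ 0 ∧ c * a = d * b) :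
    Nonempty (OreSet R⁰) := by
  refine nonempty_oreSet_iff_of_noZeroDivisors.2 fun r s ↦ ?_
  by_cases hr : r = 0
  · exact ⟨0, 1, by simp [hr]⟩
  · obtain ⟨c, d, hc, -, h⟩ := hOreL r s hr (coe_ne_zero s)
    exact ⟨d, ⟨c, mem_nonZeroDivisors_of_ne_zero hc⟩, h⟩

variable [OreSet R⁰]

theorem exists_injective_fin_pi_oreLocalization (M : Type*) [AddCommGroup M] [Module R M]
    [Module.Finite R M] (htf : ∀ (a : R) (m : M), a ≠ 0 → a • m = 0 → m = 0) :
    ∃ (n : ℕ) (f : M →ₗ[R] (Fin n → R[R⁰⁻¹])), Injective f :=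
  let e := (Module.finBasis R[R⁰⁻¹] M[R⁰⁻¹]).equivFun.restrictScalars R
  ⟨_, e.toLinearMap ∘ₗ mkLinearMap R⁰ M,
    e.injective.comp (mkLinearMap_injective fun s m ↦ htf s m (coe_ne_zero s))⟩

lemma exists_mul_numeratorHom_eq_numeratorHom
    (hOreR : ∀ a b : R, a ≠ 0 → b ≠ 0 → ∃ c d : R, c ≠ 0 ∧ d ≠ 0 ∧ a * c = b * d)
    (q : R[R⁰⁻¹]) :
    ∃ t : R, t ≠ 0 ∧ ∃ u : R, q * numeratorHom t = numeratorHom u := by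
  induction q using OreLocalization.ind with | _ r s
  by_cases hr : r = 0
  · exact ⟨1, one_ne_zero, 0, by simp [hr]⟩
  obtain ⟨c, d, hc, -, h⟩ := hOreR r s hr (coe_ne_zero s)
  refine ⟨c, hc, d, ?_⟩
  rw [numeratorHom_apply, numeratorHom_apply, mul_div_one, h, oreDiv_eq_iff]
  exact ⟨s, 1, by simp [Submonoid.smul_def], by simp⟩

lemma exists_common_right_denominator
    (hOreR : ∀ a b : R, a ≠ 0 → b ≠ 0 → ∃ c d : R, c ≠ 0 ∧ d ≠ 0 ∧ a * c = b * d)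
    (Q : Finset R[R⁰⁻¹]) :
    ∃ t : R, t ≠ 0 ∧ ∀ q ∈ Q, ∃ u : R, q * numeratorHom t = numeratorHom u := by
  classical
  induction Q using Finset.induction with
  | empty => exact ⟨1, one_ne_zero, by simp⟩
  | insert q Q _ ih =>
    obtain ⟨t, ht, hQ⟩ := ih
    obtain ⟨t₁, ht₁, u₁, hq⟩ := exists_mul_numeratorHom_eq_numeratorHom hOreR q
    obtain ⟨c, d, hc, -, h⟩ := hOreR t₁ t ht₁ ht
    refine ⟨t₁ * c, mul_ne_zero ht₁ hc, ?_⟩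
    intro p hp
    rcases Finset.mem_insert.1 hp with rfl | hp
    · exact ⟨u₁ * c, by rw [map_mul, ← mul_assoc, hq, ← map_mul]⟩
    · obtain ⟨u, hu⟩ := hQ p hp
      exact ⟨u * d, by rw [h, map_mul, ← mul_assoc, hu, ← map_mul]⟩

lemma exists_linearMap_ker_le
    (hOreR : ∀ a b : R, a ≠ 0 → b ≠ 0 → ∃ c d : R, c ≠ 0 ∧ d ≠ 0 ∧ a * c = b * d)
    {M : Type*} [AddCommGroup M] [Module R M] [Module.Finite R M] (f : M →ₗ[R] R[R⁰⁻¹]) :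
    ∃ g : M →ₗ[R] R, ker g ≤ ker f := by
  classical
  obtain ⟨G, hG⟩ := Module.Finite.fg_top (R := R) (M := M)
  obtain ⟨t, ht, hden⟩ := exists_common_right_denominator hOreR (G.image f)
  have hft : range (mulRight R (numeratorHom t) ∘ₗ f) ≤ range (mkLinearMap R⁰ R) := by
    rw [range_eq_map, ← hG, Submodule.map_span_le]
    intro m hm
    obtain ⟨u, hu⟩ := hden (f m) (Finset.mem_image_of_mem f hm)
    exact ⟨u, hu.symm⟩
  have hmk : Injective (mkLinearMap R⁰ R) :=
    mkLinearMap_injective fun s r ↦ (smul_eq_zero.1 · |>.resolve_left (coe_ne_zero s))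
  obtain ⟨g, hg⟩ := exists_comp_eq_of_range_le _ hmk hft
  refine ⟨g, (ker_le_ker_comp g (mkLinearMap R⁰ R)).trans ?_⟩
  rw [hg, ker_comp_of_ker_eq_bot]
  exact ker_eq_bot.2 (mul_left_injective₀ ((map_ne_zero_iff _ hmk).2 ht))

theorem exists_injective_pi_of_injective_pi_oreLocalization
    (hOreR : ∀ a b : R, a ≠ 0 → b ≠ 0 → ∃ c d : R, c ≠ 0 ∧ d ≠ 0 ∧ a * c = b * d)
    {M : Type*} [AddCommGroup M] [Module R M] [Module.Finite R M] {ι : Type*}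
    {f : M →ₗ[R] (ι → R[R⁰⁻¹])} (hf : Injective f) :
    ∃ g : M →ₗ[R] (ι → R), Injective g := by
  choose g hg using fun i ↦ exists_linearMap_ker_le hOreR (proj i ∘ₗ f)
  refine ⟨pi g, (injective_iff_map_eq_zero _).2 fun m hm ↦ ?_⟩
  exact (injective_iff_map_eq_zero f).1 hf m (funext fun i ↦ hg i (congrFun hm i))

end OreDomain

/-- Cohn's embedding theorem: every finitely generated torsion-free left module over a left
and right Ore domain embeds into a finitely generated free module. -/
theorem stmt8 (R : Type) [Ring R] [IsDomain R]
    (hOreL : ∀ a b : R, a ≠ 0 → b ≠ 0 → ∃ c d : R, c ≠ 0 ∧ d ≠ 0 ∧ c * a = d * b)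
    (hOreR : ∀ a b : R, a ≠ 0 → b ≠ 0 → ∃ c' d' : R, c' ≠ 0 ∧ d' ≠ 0 ∧ a * c' = b * d')
    (M : Type) [AddCommGroup M] [Module R M] [Module.Finite R M]
    (htf : ∀ (a : R) (m : M), a ≠ 0 → a • m = 0 → m = 0) :
    ∃ (n : ℕ) (f : M →ₗ[R] (Fin n → R)), Function.Injective f := by
  obtain ⟨_⟩ := nonempty_oreSet_nonZeroDivisors hOreL
  obtain ⟨n, f, hf⟩ := exists_injective_fin_pi_oreLocalization M htf
  exact ⟨n, exists_injective_pi_of_injective_pi_oreLocalization hOreR hf⟩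
end

section
/- Let Γ be a group and p a prime such that (ℤ/pℤ)Γ has no nontrivial zero divisors. Let f ∈ ℤΓ be nonzero with |f|_p = 0 (i.e., not all coefficients of f are divisible by p). Then the quotient module ℤΓ/ℤΓf has no p-torsion: if h ∈ ℤΓ and p·h ∈ ℤΓf, then h ∈ ℤΓf. -/
/-!
Reduce mod `p`. From `g * f = p * h` we get `ḡ * f̄ = 0` in `(ℤ/pℤ)Γ`, and `f̄ ≠ 0`, so `ḡ = 0`,
i.e. `g = p * g'`. Then `p * (g' * f) = p * h`, and since `ℤΓ` is torsion-free, `h = g' * f`.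
-/

namespace MonoidAlgebra

instance {R M : Type*} [Semiring R] [IsAddTorsionFree R] : IsAddTorsionFree R[M] :=
  Function.Injective.isAddTorsionFree (coeffAddEquiv (R := R) (M := M)).toAddMonoidHom
    coeffAddEquiv.injective

variable {M : Type*} [Monoid M]

lemma coeff_natCast_mul {R : Type*} [Semiring R] (n : ℕ) (x : R[M]) (m : M) :
    ((n : R[M]) * x).coeff m = n * x.coeff m := by
  rw [natCast_def, coeff_single_one_mul]

lemma natCast_dvd_iff {n : ℕ} {x : ℤ[M]} : (n : ℤ[M]) ∣ x ↔ ∀ m, (n : ℤ) ∣ x.coeff m := by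
  refine ⟨fun ⟨y, hy⟩ m => ⟨y.coeff m, by rw [hy, coeff_natCast_mul]⟩, fun hdvd => ?_⟩
  refine ⟨ofCoeff (x.coeff.mapRange (· / (n : ℤ)) (Int.zero_ediv _)), ?_⟩
  ext m
  rw [coeff_natCast_mul, coeff_ofCoeff, Finsupp.mapRange_apply, Int.mul_ediv_cancel' (hdvd m)]

lemma mapRingHom_intCast_eq_zero_iff {n : ℕ} {x : ℤ[M]} :
    mapRingHom M (Int.castRingHom (ZMod n)) x = 0 ↔ (n : ℤ[M]) ∣ x := by
  simp only [natCast_dvd_iff, ← ZMod.intCast_zmod_eq_zero_iff_dvd, MonoidAlgebra.ext_iff,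
    Finsupp.ext_iff, coeff_mapRingHom, eq_intCast, coeff_zero, Finsupp.coe_zero, Pi.zero_apply]

end MonoidAlgebra

open MonoidAlgebra

theorem stmt10_general (Γ : Type) [Group Γ] (p : ℕ) (hp : p.Prime)
    (hzd : ∀ a b : MonoidAlgebra (ZMod p) Γ, a * b = 0 → a = 0 ∨ b = 0)
    (f : MonoidAlgebra ℤ Γ)
    (hvp : ¬ ∀ γ : Γ, (p : ℤ) ∣ f.coeff γ) :
    ∀ h : MonoidAlgebra ℤ Γ,
      (p : MonoidAlgebra ℤ Γ) * h ∈ Submodule.span (MonoidAlgebra ℤ Γ) {f} →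
      h ∈ Submodule.span (MonoidAlgebra ℤ Γ) {f} := by
  intro h hph
  obtain ⟨g, hgf⟩ := Submodule.mem_span_singleton.mp hph
  rw [smul_eq_mul] at hgf
  set π := mapRingHom Γ (Int.castRingHom (ZMod p))
  have hπf : π f ≠ 0 := by rwa [Ne, mapRingHom_intCast_eq_zero_iff, natCast_dvd_iff]
  have hπg : π g = 0 := by
    refine (hzd _ _ ?_).resolve_right hπf
    rw [← map_mul, hgf, map_mul, map_natCast, natCast_def, ZMod.natCast_self, single_zero, zero_mul]
  obtain ⟨g', rfl⟩ := mapRingHom_intCast_eq_zero_iff.mp hπg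
  refine Submodule.mem_span_singleton.mpr ⟨g', nsmul_right_injective hp.ne_zero ?_⟩
  simp only [smul_eq_mul, nsmul_eq_mul, ← hgf, mul_assoc]

/-- If `(ℤ/pℤ)Γ` has no nontrivial zero divisors and `f ∈ ℤΓ` is nonzero with `|f|_p = 0`
(not all coefficients of `f` divisible by `p`), then `ℤΓ/ℤΓf` has no `p`-torsion. -/
theorem stmt10 (Γ : Type) [Group Γ] (p : ℕ) (hp : p.Prime)
    (hzd : ∀ a b : MonoidAlgebra (ZMod p) Γ, a * b = 0 → a = 0 ∨ b = 0)
    (f : MonoidAlgebra ℤ Γ) (hf : f ≠ 0)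
    (hvp : ¬ ∀ γ : Γ, (p : ℤ) ∣ f.coeff γ) :
    ∀ h : MonoidAlgebra ℤ Γ,
      (p : MonoidAlgebra ℤ Γ) * h ∈ Submodule.span (MonoidAlgebra ℤ Γ) {f} →
      h ∈ Submodule.span (MonoidAlgebra ℤ Γ) {f} :=
  stmt10_general Γ p hp hzd f hvp
end

section
/- Let R be a ring carrying a rank function rk on left modules with values in [0,∞], additive on short exact sequences, satisfying rk(R) = 1, rk(P) ∈ ℕ for every finitely generated projective P, and such that every nonzero left ideal has positive rank. Suppose every finitely generated left ideal of R admits a finite resolution by finitely generated projective modules. If R is left noetherian, then R has no nontrivial zero divisors. -/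
/-!
For `b ∈ R`, the left annihilator `I = {a | a * b = 0}` is the kernel of `a ↦ a * b`, so
`0 → I → R → R b → 0` is exact and `rk I + rk (R b) = rk R = 1`. Since `R` is left noetherian,
`I` is finitely generated, and walking its finite projective resolution from the top down shows
that `rk I` is a natural number. Hence either `rk I = 0`, so `I = 0`, or `rk (R b) = 0`,
so `b = 0`.
-/

open scoped ENNReal

def RankAdditive (R : Type) [Ring R]
    (rk : (N : Type) → [AddCommGroup N] → [Module R N] → ℝ≥0∞) : Prop :=
  ∀ (A : Type) [AddCommGroup A] [Module R A]
    (B : Type) [AddCommGroup B] [Module R B]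
    (C : Type) [AddCommGroup C] [Module R C]
    (φ : A →ₗ[R] B) (ψ : B →ₗ[R] C),
    Function.Injective φ → Function.Surjective ψ → Function.Exact φ ψ →
    rk B = rk A + rk C

theorem ENNReal.exists_nat_eq_of_natCast_eq_add {x : ℝ≥0∞} {m n : ℕ} (h : (n : ℝ≥0∞) = m + x) :
    ∃ j : ℕ, x = j := by
  have hmn : m ≤ n := by exact_mod_cast (le_self_add.trans h.ge : (m : ℝ≥0∞) ≤ n)
  refine ⟨n - m, (ENNReal.add_right_inj (ENNReal.natCast_ne_top m)).mp ?_⟩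
  rw [← h, ← Nat.cast_add, Nat.add_sub_cancel' hmn]

section

variable {R : Type} [Ring R] {rk : (N : Type) → [AddCommGroup N] → [Module R N] → ℝ≥0∞}

theorem exists_nat_rank_of_isCompl
    (hint : ∀ (P : Type) [AddCommGroup P] [Module R P],
      Module.Projective R P → Module.Finite R P → ∃ k : ℕ, rk P = k)
    {M : Type} [AddCommGroup M] [Module R M] [Module.Projective R M] [Module.Finite R M]
    {P Q : Submodule R M} (hPQ : IsCompl P Q) : ∃ n : ℕ, rk P = n := by
  have hsplit : P.projectionOnto Q hPQ ∘ₗ P.subtype = LinearMap.id :=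
    LinearMap.ext (Submodule.projectionOnto_apply_left hPQ)
  exact hint P (.of_split _ _ hsplit) (.of_surjective _ (Submodule.projectionOnto_surjective hPQ))

theorem eq_bot_of_rank_eq_zero (hpos : ∀ I : Submodule R R, I ≠ ⊥ → 0 < rk I)
    {I : Submodule R R} (hI : rk I = 0) : I = ⊥ := by
  by_contra hne
  exact (hpos I hne).ne' hI

end

namespace RankAdditive

variable {R : Type} [Ring R] {rk : (N : Type) → [AddCommGroup N] → [Module R N] → ℝ≥0∞}
  (hadd : RankAdditive R rk)
include hadd

theorem rank_eq_rank_ker_add {B C : Type} [AddCommGroup B] [Module R B]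
    [AddCommGroup C] [Module R C] (ψ : B →ₗ[R] C) (hψ : Function.Surjective ψ) :
    rk B = rk (LinearMap.ker ψ) + rk C :=
  hadd _ B C (LinearMap.ker ψ).subtype ψ (Submodule.injective_subtype _) hψ <| by
    rw [LinearMap.exact_iff, Submodule.range_subtype]

theorem rank_eq_rank_ker_add_rank_range {B C : Type} [AddCommGroup B] [Module R B]
    [AddCommGroup C] [Module R C] (f : B →ₗ[R] C) :
    rk B = rk (LinearMap.ker f) + rk (LinearMap.range f) := by
  rw [hadd.rank_eq_rank_ker_add f.rangeRestrict f.surjective_rangeRestrict,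
    LinearMap.ker_rangeRestrict]

theorem rank_eq_zero_of_subsingleton {M : Type} [AddCommGroup M] [Module R M] (hM : rk M ≠ ∞)
    (Z : Type) [AddCommGroup Z] [Module R Z] [Subsingleton Z] : rk Z = 0 := by
  have hseq : rk M = rk Z + rk M :=
    hadd Z M M 0 LinearMap.id (Function.injective_of_subsingleton _) Function.surjective_id
      fun y => by simp [eq_comm]
  exact (ENNReal.add_left_inj hM).mp (hseq.symm.trans (zero_add _).symm)

theorem exists_nat_rank_of_surjective {B C : Type} [AddCommGroup B] [Module R B]
    [AddCommGroup C] [Module R C] (ψ : B →ₗ[R] C) (hψ : Function.Surjective ψ)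
    (hB : ∃ n : ℕ, rk B = n) (hker : ∃ n : ℕ, rk (LinearMap.ker ψ) = n) : ∃ n : ℕ, rk C = n := by
  obtain ⟨n, hn⟩ := hB
  obtain ⟨m, hm⟩ := hker
  exact ENNReal.exists_nat_eq_of_natCast_eq_add (hn ▸ hm ▸ hadd.rank_eq_rank_ker_add ψ hψ)

theorem exists_nat_rank_range_of_bounded_exact (M : ℕ → Type) [∀ i, AddCommGroup (M i)]
    [∀ i, Module R (M i)] (hM : ∀ i, ∃ n : ℕ, rk (M i) = n) (d : ∀ i, M (i + 1) →ₗ[R] M i)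
    {m : ℕ} (hvanish : ∀ i, m < i → Subsingleton (M i))
    (hd : ∀ i, Function.Exact (d (i + 1)) (d i)) (i : ℕ) :
    ∃ n : ℕ, rk (LinearMap.range (d i)) = n := by
  obtain ⟨n₀, hn₀⟩ := hM 0
  suffices ∀ t i, m ≤ i + t → ∃ n : ℕ, rk (LinearMap.range (d i)) = n from this m i (by omega)
  intro t
  induction t with
  | zero =>
    intro i hi
    have := hvanish (i + 1) (by omega)
    have : Subsingleton (LinearMap.range (d i)) :=
      ⟨by rintro ⟨_, x, rfl⟩ ⟨_, y, rfl⟩; rw [Subsingleton.elim x y]⟩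
    refine ⟨0, ?_⟩
    rw [hadd.rank_eq_zero_of_subsingleton (hn₀ ▸ ENNReal.natCast_ne_top n₀), Nat.cast_zero]
  | succ t ih =>
    intro i hi
    refine hadd.exists_nat_rank_of_surjective (d i).rangeRestrict (d i).surjective_rangeRestrict
      (hM (i + 1)) ?_
    rw [LinearMap.ker_rangeRestrict, LinearMap.exact_iff.mp (hd i)]
    exact ih (i + 1) (by omega)

theorem exists_nat_rank_of_resolution (M : ℕ → Type) [∀ i, AddCommGroup (M i)]
    [∀ i, Module R (M i)] (hM : ∀ i, ∃ n : ℕ, rk (M i) = n) (d : ∀ i, M (i + 1) →ₗ[R] M i)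
    {m : ℕ} (hvanish : ∀ i, m < i → Subsingleton (M i))
    (hd : ∀ i, Function.Exact (d (i + 1)) (d i))
    {N : Type} [AddCommGroup N] [Module R N] (ε : M 0 →ₗ[R] N) (hε : Function.Surjective ε)
    (hεd : Function.Exact (d 0) ε) : ∃ n : ℕ, rk N = n := by
  refine hadd.exists_nat_rank_of_surjective ε hε (hM 0) ?_
  rw [LinearMap.exact_iff.mp hεd]
  exact hadd.exists_nat_rank_range_of_bounded_exact M hM d hvanish hd 0

theorem ker_eq_bot_or_eq_zero (hone : rk R = 1) (hpos : ∀ I : Submodule R R, I ≠ ⊥ → 0 < rk I)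
    (f : R →ₗ[R] R) (hker : ∃ n : ℕ, rk (LinearMap.ker f) = n) :
    LinearMap.ker f = ⊥ ∨ f = 0 := by
  obtain ⟨n, hn⟩ := hker
  have hsum : (n : ℝ≥0∞) + rk (LinearMap.range f) = 1 := by
    rw [← hn, ← hadd.rank_eq_rank_ker_add_rank_range, hone]
  have hn1 : n ≤ 1 := by exact_mod_cast (le_self_add.trans hsum.le : (n : ℝ≥0∞) ≤ 1)
  interval_cases n
  · exact .inl (eq_bot_of_rank_eq_zero hpos (by rw [hn, Nat.cast_zero]))
  · refine .inr (LinearMap.range_eq_bot.mp (eq_bot_of_rank_eq_zero hpos ?_))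
    rw [Nat.cast_one] at hsum
    exact (ENNReal.add_right_inj ENNReal.one_ne_top).mp (hsum.trans (add_zero 1).symm)

end RankAdditive

/-- Abstract Farkas–Snider argument: let `R` be a left noetherian ring with a rank function
`rk` on left modules, additive on short exact sequences, with `rk R = 1`, integer values on
finitely generated projectives, and positive on nonzero left ideals.  If every finitely
generated left ideal admits a finite resolution by finitely generated projective modules
(encoded as direct summands of finitely generated free modules), then `R` has no nontrivial
zero divisors. -/
theorem stmt18 (R : Type) [Ring R] [IsNoetherianRing R]
    (rk : (N : Type) → [AddCommGroup N] → [Module R N] → ℝ≥0∞)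
    (hadd : ∀ (A : Type) [AddCommGroup A] [Module R A]
        (B : Type) [AddCommGroup B] [Module R B]
        (C : Type) [AddCommGroup C] [Module R C]
        (φ : A →ₗ[R] B) (ψ : B →ₗ[R] C),
        Function.Injective φ → Function.Surjective ψ → Function.Exact φ ψ →
        rk B = rk A + rk C)
    (hone : rk R = 1)
    (hint : ∀ (P : Type) [AddCommGroup P] [Module R P],
        Module.Projective R P → Module.Finite R P → ∃ k : ℕ, rk P = k)
    (hpos : ∀ I : Submodule R R, I ≠ ⊥ → 0 < rk I)
    (hres : ∀ I : Submodule R R, I.FG →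
      ∃ (m : ℕ) (k : ℕ → ℕ) (P : ∀ i : ℕ, Submodule R (Fin (k i) → R))
        (d : ∀ i : ℕ, ↥(P (i + 1)) →ₗ[R] ↥(P i)) (ε : ↥(P 0) →ₗ[R] ↥I),
        (∀ i, ∃ Q : Submodule R (Fin (k i) → R), IsCompl (P i) Q) ∧
        (∀ i, m < i → P i = ⊥) ∧
        Function.Surjective ε ∧
        Function.Exact (d 0) ε ∧
        (∀ i, Function.Exact (d (i + 1)) (d i))) :
    ∀ a b : R, a * b = 0 → a = 0 ∨ b = 0 := by
  replace hadd : RankAdditive R rk := hadd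
  intro a b hab
  set f : R →ₗ[R] R := LinearMap.toSpanSingleton R R b
  obtain ⟨m, k, P, d, ε, hcompl, hvanish, hε, hεd, hd⟩ :=
    hres (LinearMap.ker f) (IsNoetherian.noetherian _)
  have hP : ∀ i, ∃ n : ℕ, rk (P i) = n := fun i =>
    (hcompl i).elim fun _ h => exists_nat_rank_of_isCompl hint h
  have hker : ∃ n : ℕ, rk (LinearMap.ker f) = n :=
    hadd.exists_nat_rank_of_resolution (fun i => P i) hP d
      (fun i hi => by rw [hvanish i hi]; infer_instance) hd ε hε hεd
  rcases hadd.ker_eq_bot_or_eq_zero hone hpos f hker with hbot | hzero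
  · exact .inl ((Submodule.mem_bot R).mp (hbot ▸ hab : a ∈ ⊥))
  · exact .inr (by simpa [f] using LinearMap.congr_fun hzero 1)
end
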